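/- Let ε > 0, γ̄ > 0 and 0 < μ ≤ γ̄, and set δ = (e^ε − 1) / ( 2 ( e^{ε γ̄ / μ} − 1 ) ). Let k be a positive integer and let γ be a random vector in ℝ^k with independent coordinates each distributed according to the truncated Laplacian density p(γ) = (ε / (2μ(1 − e^{−εγ̄/μ}))) e^{−ε|γ|/μ} on [−γ̄, γ̄] (and 0 outside). Then for every pair θ, θ' ∈ ℝ^k that differ in at most one coordinate and satisfy ‖θ − θ'‖_1 ≤ μ, and for every Borel set S ⊆ ℝ^k, P( θ + γ ∈ S ) ≤ e^ε · P( θ' + γ ∈ S ) + δ. -/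

import Mathlib

/-!
Only one coordinate of `θ` and `θ'` differs, by some `s` with `|s| ≤ μ`, so integrating over the
other coordinates of the product law of `γ` reduces the claim to the one-dimensional bound
`ν (C - s) ≤ e^ε ν C + δ` for the truncated Laplacian law `ν`. Its density `p` satisfies
`p z ≤ e^ε p (z + s)` except on the strip `B = {|z| ≤ γ̄ < |z + s|}` where `z + s` leaves the
support, and `B` lies in an interval of length `|s|` at one end of the support, of mass
`e^{-εγ̄/μ} (e^{ε|s|/μ} - 1) / (2 (1 - e^{-εγ̄/μ})) ≤ δ`.
-/

open MeasureTheory ProbabilityTheory Finset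

/-- The probability density function of the truncated Laplacian distribution with
scale `μ/ε`, truncated to the interval `[-γ̄, γ̄]`. -/
noncomputable def truncLapPDF (ε μ γbar : ℝ) (x : ℝ) : ℝ :=
  if |x| ≤ γbar then ε / (2 * μ * (1 - Real.exp (-(ε * γbar) / μ))) * Real.exp (-(ε * |x|) / μ)
  else 0

open Set Function
open scoped ENNReal

section Translation

variable {G : Type*} [MeasurableSpace G]

theorem withDensity_preimage_add_right_le [AddGroup G] [MeasurableAdd G] (ν : Measure G)
    [SFinite ν] [ν.IsAddRightInvariant] {f : G → ℝ≥0∞} (hf : Measurable f) {a : ℝ≥0∞}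
    {s : G} {B : Set G} (hfB : ∀ z ∉ B, f z ≤ a * f (z + s)) {C : Set G}
    (hC : MeasurableSet C) :
    ν.withDensity f ((· + s) ⁻¹' C) ≤ a * ν.withDensity f C + ν.withDensity f B := by
  set T := (· + s) ⁻¹' C
  have hfs : Measurable fun z => f (z + s) := hf.comp (measurable_add_const s)
  calc ν.withDensity f T ≤ ν.withDensity f (T \ B) + ν.withDensity f B :=
        (measure_mono (Set.subset_sdiff_union _ B)).trans (measure_union_le _ _)
    _ ≤ a * ν.withDensity f C + ν.withDensity f B := by
      gcongr
      calc ν.withDensity f (T \ B) = ∫⁻ z in T \ B, f z ∂ν := withDensity_apply' f _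
        _ ≤ ∫⁻ z in T \ B, a * f (z + s) ∂ν :=
          setLIntegral_mono (hfs.const_mul a) fun z hz => hfB z hz.2
        _ ≤ ∫⁻ z in T, a * f (z + s) ∂ν := lintegral_mono_set Set.sdiff_subset
        _ = a * ∫⁻ z in C, f z ∂ν := by
          rw [lintegral_const_mul a hfs,
            (measurePreserving_add_right ν s).setLIntegral_comp_preimage hC hf]
        _ = a * ν.withDensity f C := by rw [withDensity_apply f hC]

theorem lintegral_const_mul_indicator_one_add_const {m : Measure G} [IsProbabilityMeasure m]
    {T : Set G} (hT : MeasurableSet T) (a b : ℝ≥0∞) :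
    ∫⁻ x, (a * T.indicator 1 x + b) ∂m = a * m T + b := by
  rw [lintegral_add_right _ measurable_const, lintegral_const_mul _ (measurable_one.indicator hT),
    lintegral_indicator_one hT, lintegral_const, measure_univ, mul_one]

theorem MeasureTheory.Measure.pi_preimage_add_single_le {ι : Type*} [Fintype ι] [DecidableEq ι]
    [AddZeroClass G] [MeasurableAdd G] (μ : ι → Measure G) [∀ i, IsProbabilityMeasure (μ i)]
    {i : ι} {s : G} {a b : ℝ≥0∞}
    (h : ∀ C, MeasurableSet C → μ i ((· + s) ⁻¹' C) ≤ a * μ i C + b)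
    {T : Set (ι → G)} (hT : MeasurableSet T) :
    Measure.pi μ ((fun x : ι → G => x + Pi.single i s) ⁻¹' T) ≤ a * Measure.pi μ T + b := by
  set T' := (fun x : ι → G => x + Pi.single i s) ⁻¹' T
  have hT' : MeasurableSet T' := hT.preimage (measurable_add_const _)
  calc Measure.pi μ T' = ∫⁻ x, T'.indicator 1 x ∂Measure.pi μ :=
        (lintegral_indicator_one hT').symm
    _ ≤ ∫⁻ x, (a * T.indicator 1 x + b) ∂Measure.pi μ := by
      refine lintegral_le_of_lmarginal_le {i} (measurable_one.indicator hT')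
        (((measurable_one.indicator hT).const_mul a).add_const b) fun x => ?_
      have hTx := hT.preimage (measurable_update x (a := i))
      have hslice : update x i ⁻¹' T' = (· + s) ⁻¹' (update x i ⁻¹' T) := by
        ext t
        simp [T', Pi.single, ← update_add]
      simp only [lmarginal_singleton]
      calc ∫⁻ t, T'.indicator 1 (update x i t) ∂μ i
          = μ i ((· + s) ⁻¹' (update x i ⁻¹' T)) := by
            rw [← hslice]
            exact lintegral_indicator_one (hT'.preimage (measurable_update x))
        _ ≤ a * μ i (update x i ⁻¹' T) + b := h _ hTx
        _ = ∫⁻ t, (a * (update x i ⁻¹' T).indicator 1 t + b) ∂μ i :=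
            (lintegral_const_mul_indicator_one_add_const hTx a b).symm
    _ = a * Measure.pi μ T + b := lintegral_const_mul_indicator_one_add_const hT a b

end Translation

section TruncLapPDF

variable {ε μ γbar : ℝ}

theorem truncLapPDF_neg (x : ℝ) : truncLapPDF ε μ γbar (-x) = truncLapPDF ε μ γbar x := by
  simp only [truncLapPDF, abs_neg]

theorem truncLapConst_nonneg (hε : 0 ≤ ε) (hμ : 0 ≤ μ) (hγ : 0 ≤ γbar) :
    0 ≤ ε / (2 * μ * (1 - Real.exp (-(ε * γbar) / μ))) := by
  have hE : Real.exp (-(ε * γbar) / μ) ≤ 1 :=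
    Real.exp_le_one_iff.mpr (div_nonpos_of_nonpos_of_nonneg (by nlinarith) hμ)
  have := sub_nonneg.mpr hE
  positivity

theorem truncLapPDF_nonneg (hε : 0 ≤ ε) (hμ : 0 ≤ μ) (hγ : 0 ≤ γbar) (x : ℝ) :
    0 ≤ truncLapPDF ε μ γbar x := by
  unfold truncLapPDF
  split_ifs
  · exact mul_nonneg (truncLapConst_nonneg hε hμ hγ) (Real.exp_nonneg _)
  · exact le_rfl

theorem measurable_truncLapPDF : Measurable (truncLapPDF ε μ γbar) :=
  Measurable.ite (measurableSet_le measurable_abs measurable_const) (by fun_prop) measurable_const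

theorem truncLapPDF_le_exp_mul (hε : 0 ≤ ε) (hμ : 0 < μ) (hγ : 0 ≤ γbar) {s z : ℝ}
    (hs : |s| ≤ μ) (hz : |z| ≤ γbar → |z + s| ≤ γbar) :
    truncLapPDF ε μ γbar z ≤ Real.exp ε * truncLapPDF ε μ γbar (z + s) := by
  by_cases hzγ : |z| ≤ γbar
  · have hdist : |z + s| - |z| ≤ μ := by linarith [abs_add_le z s]
    rw [truncLapPDF, truncLapPDF, if_pos hzγ, if_pos (hz hzγ), mul_left_comm, ← Real.exp_add]
    refine mul_le_mul_of_nonneg_left (Real.exp_le_exp.mpr ?_) (truncLapConst_nonneg hε hμ.le hγ)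
    rw [div_le_iff₀ hμ, add_mul, div_mul_cancel₀ _ hμ.ne']
    nlinarith [mul_le_mul_of_nonneg_left hdist hε]
  · rw [truncLapPDF, if_neg hzγ]
    exact mul_nonneg (Real.exp_nonneg ε) (truncLapPDF_nonneg hε hμ.le hγ _)

end TruncLapPDF

section TruncLapMeasure

variable {ε μ γbar : ℝ}

variable (ε μ γbar) in
noncomputable def truncLapMeasure : Measure ℝ :=
  volume.withDensity fun x => ENNReal.ofReal (truncLapPDF ε μ γbar x)

theorem integral_exp_neg_mul_div (hε : ε ≠ 0) (hμ : μ ≠ 0) (a b : ℝ) :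
    ∫ x in a..b, Real.exp (-(ε * x) / μ) =
      μ / ε * (Real.exp (-(ε * a) / μ) - Real.exp (-(ε * b) / μ)) := by
  have hderiv (x : ℝ) : HasDerivAt (fun x => -(μ / ε) * Real.exp (-(ε * x) / μ))
      (Real.exp (-(ε * x) / μ)) x := by
    have h : HasDerivAt (fun x => -(μ / ε) * Real.exp (-(ε * x) / μ))
        (-(μ / ε) * (Real.exp (-(ε * x) / μ) * (-(ε * 1) / μ))) x :=
      (((hasDerivAt_id x).const_mul ε).neg.div_const μ).exp.const_mul _
    convert h using 1
    field_simp
  rw [intervalIntegral.integral_eq_sub_of_hasDerivAt (fun x _ => hderiv x)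
    (by apply Continuous.intervalIntegrable; fun_prop)]
  ring

theorem truncLapMeasure_Ioc (hε : 0 < ε) (hμ : 0 < μ) {a b : ℝ} (ha : 0 ≤ a) (hab : a ≤ b)
    (hb : b ≤ γbar) :
    truncLapMeasure ε μ γbar (Ioc a b) = ENNReal.ofReal
      ((Real.exp (-(ε * a) / μ) - Real.exp (-(ε * b) / μ)) /
        (2 * (1 - Real.exp (-(ε * γbar) / μ)))) := by
  set c := ε / (2 * μ * (1 - Real.exp (-(ε * γbar) / μ)))
  have hpdf : EqOn (fun x => ENNReal.ofReal (truncLapPDF ε μ γbar x))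
      (fun x => ENNReal.ofReal (c * Real.exp (-(ε * x) / μ))) (Ioc a b) := by
    intro x hx
    have hx0 : |x| = x := abs_of_pos (ha.trans_lt hx.1)
    simp only [truncLapPDF, hx0, if_pos (hx.2.trans hb), c]
  have hc : 0 ≤ c := truncLapConst_nonneg hε.le hμ.le (ha.trans (hab.trans hb))
  rw [truncLapMeasure, withDensity_apply _ measurableSet_Ioc,
    setLIntegral_congr_fun measurableSet_Ioc hpdf,
    ← ofReal_integral_eq_lintegral_ofReal (by fun_prop : Continuous _).integrableOn_Ioc
      (Filter.Eventually.of_forall fun x => by positivity),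
    ← intervalIntegral.integral_of_le hab, intervalIntegral.integral_const_mul,
    integral_exp_neg_mul_div hε.ne' hμ.ne']
  congr 1
  simp only [c]
  field_simp

theorem truncLapMeasure_neg_preimage {t : Set ℝ} (ht : MeasurableSet t) :
    truncLapMeasure ε μ γbar (Neg.neg ⁻¹' t) = truncLapMeasure ε μ γbar t := by
  rw [truncLapMeasure, withDensity_apply _ (ht.preimage measurable_neg), withDensity_apply _ ht,
    ← (Measure.measurePreserving_neg volume).setLIntegral_comp_preimage ht
      measurable_truncLapPDF.ennreal_ofReal]
  simp only [truncLapPDF_neg]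

theorem truncLapMeasure_ne_zero (hε : 0 < ε) (hμ : 0 < μ) (hγ : 0 < γbar) :
    truncLapMeasure ε μ γbar ≠ 0 := by
  have hE : Real.exp (-(ε * γbar) / μ) < 1 :=
    Real.exp_lt_one_iff.mpr (by rw [neg_div, neg_lt_zero]; positivity)
  have hpos : 0 < truncLapMeasure ε μ γbar (Ioc 0 γbar) := by
    rw [truncLapMeasure_Ioc hε hμ le_rfl hγ.le le_rfl, ENNReal.ofReal_pos, mul_zero, neg_zero,
      zero_div, Real.exp_zero]
    have := sub_pos.mpr hE
    positivity
  intro h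
  rw [h] at hpos
  exact hpos.ne' rfl

theorem truncLapMeasure_Ioc_sub_le (hε : 0 < ε) (hμ : 0 < μ) (hμγ : μ ≤ γbar) {u : ℝ}
    (hu : 0 ≤ u) (huμ : u ≤ μ) :
    truncLapMeasure ε μ γbar (Ioc (γbar - u) γbar) ≤
      ENNReal.ofReal ((Real.exp ε - 1) / (2 * (Real.exp (ε * γbar / μ) - 1))) := by
  rw [truncLapMeasure_Ioc hε hμ (by linarith) (by linarith) le_rfl]
  apply ENNReal.ofReal_le_ofReal
  set E := Real.exp (-(ε * γbar) / μ)
  have hE : E < 1 := Real.exp_lt_one_iff.mpr <| by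
    rw [neg_div, neg_lt_zero]
    have := hμ.trans_le hμγ
    positivity
  have hE0 : 0 < E := Real.exp_pos _
  have hinv : Real.exp (ε * γbar / μ) = E⁻¹ := by rw [← Real.exp_neg, neg_div, neg_neg]
  have hshift : Real.exp (-(ε * (γbar - u)) / μ) = E * Real.exp (ε * u / μ) := by
    rw [← Real.exp_add]
    ring_nf
  have hδ : (Real.exp ε - 1) / (2 * (Real.exp (ε * γbar / μ) - 1)) =
      (E * Real.exp ε - E) / (2 * (1 - E)) := by
    rw [hinv]
    field_simp
  rw [hδ, hshift]
  refine div_le_div_of_nonneg_right (sub_le_sub_right ?_ E) (by linarith)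
  refine mul_le_mul_of_nonneg_left (Real.exp_le_exp.mpr ?_) hE0.le
  rw [div_le_iff₀ hμ]
  nlinarith

theorem truncLapMeasure_tail_le (hε : 0 < ε) (hμ : 0 < μ) (hμγ : μ ≤ γbar) {s : ℝ}
    (hs : |s| ≤ μ) :
    truncLapMeasure ε μ γbar {z | |z| ≤ γbar ∧ γbar < |z + s|} ≤
      ENNReal.ofReal ((Real.exp ε - 1) / (2 * (Real.exp (ε * γbar / μ) - 1))) := by
  obtain ⟨hsμ', hsμ⟩ := abs_le.mp hs
  rcases le_total 0 s with h | h
  · refine (measure_mono ?_).trans (truncLapMeasure_Ioc_sub_le hε hμ hμγ h hsμ)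
    rintro z ⟨hz, hzs⟩
    obtain ⟨hz', hz''⟩ := abs_le.mp hz
    rcases lt_abs.mp hzs with hzs | hzs
    · exact ⟨by linarith, hz''⟩
    · linarith
  · refine (measure_mono (t := Neg.neg ⁻¹' Ioc (γbar - -s) γbar) ?_).trans ?_
    · rintro z ⟨hz, hzs⟩
      obtain ⟨hz', hz''⟩ := abs_le.mp hz
      rcases lt_abs.mp hzs with hzs | hzs
      · linarith
      · exact ⟨by linarith, by linarith⟩
    · rw [truncLapMeasure_neg_preimage measurableSet_Ioc]
      exact truncLapMeasure_Ioc_sub_le hε hμ hμγ (by linarith) (by linarith)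

theorem truncLapMeasure_preimage_add_le (hε : 0 < ε) (hμ : 0 < μ) (hμγ : μ ≤ γbar) {s : ℝ}
    (hs : |s| ≤ μ) {C : Set ℝ} (hC : MeasurableSet C) :
    truncLapMeasure ε μ γbar ((· + s) ⁻¹' C) ≤
      ENNReal.ofReal (Real.exp ε) * truncLapMeasure ε μ γbar C +
        ENNReal.ofReal ((Real.exp ε - 1) / (2 * (Real.exp (ε * γbar / μ) - 1))) := by
  refine (withDensity_preimage_add_right_le volume measurable_truncLapPDF.ennreal_ofReal
    (fun z hz => ?_) hC).trans (add_le_add_right (truncLapMeasure_tail_le hε hμ hμγ hs) _)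
  rw [← ENNReal.ofReal_mul (Real.exp_nonneg ε)]
  refine ENNReal.ofReal_le_ofReal (truncLapPDF_le_exp_mul hε.le hμ (hμ.le.trans hμγ) hs ?_)
  simpa only [mem_ofPred_eq, not_and, not_lt] using hz

end TruncLapMeasure

theorem eq_add_single_of_subsingleton_ne {ι M : Type*} [DecidableEq ι] [AddCommGroup M]
    {θ θ' : ι → M} (h : {i | θ i ≠ θ' i}.Subsingleton) {i : ι} (hi : θ i ≠ θ' i) :
    θ = θ' + Pi.single i (θ i - θ' i) := by
  funext j
  by_cases hj : j = i
  · subst hj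
    simp
  · have : θ j = θ' j := by_contra fun hne => hj (h hne hi)
    simp [hj, this]

theorem stmt14_general (ε μ γbar : ℝ) (hε : 0 < ε) (hμ : 0 < μ) (hμγ : μ ≤ γbar)
    (δ : ℝ) (hδ : δ = (Real.exp ε - 1) / (2 * (Real.exp (ε * γbar / μ) - 1)))
    (k : ℕ)
    {Ω : Type*} [MeasurableSpace Ω] (P : Measure Ω) [IsProbabilityMeasure P]
    (γ : Ω → Fin k → ℝ)
    (hindep : iIndepFun (fun i ω => γ ω i) P)
    (hlaw : ∀ i, Measure.map (fun ω => γ ω i) P =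
      MeasureTheory.volume.withDensity (fun x => ENNReal.ofReal (truncLapPDF ε μ γbar x)))
    (θ θ' : Fin k → ℝ)
    (hadj0 : {i | θ i ≠ θ' i}.Subsingleton)
    (hadj1 : ∑ i, |θ i - θ' i| ≤ μ)
    (S : Set (Fin k → ℝ)) (hS : MeasurableSet S) :
    P {ω | θ + γ ω ∈ S} ≤
      ENNReal.ofReal (Real.exp ε) * P {ω | θ' + γ ω ∈ S} + ENNReal.ofReal δ := by
  by_cases hθ : θ = θ'
  · subst hθ
    exact le_add_right (le_mul_of_one_le_left' (ENNReal.one_le_ofReal.mpr (Real.one_le_exp hε.le)))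
  obtain ⟨i, hi⟩ : ∃ i, θ i ≠ θ' i := Function.ne_iff.mp hθ
  set ν := truncLapMeasure ε μ γbar
  have hlaw' (j : Fin k) : P.map (fun ω => γ ω j) = ν := hlaw j
  have hγ (j : Fin k) : AEMeasurable (fun ω => γ ω j) P := AEMeasurable.of_map_ne_zero
    ((hlaw' j).trans_ne (truncLapMeasure_ne_zero hε hμ (hμ.trans_le hμγ)))
  have : IsProbabilityMeasure ν := hlaw' i ▸ Measure.isProbabilityMeasure_map (hγ i)
  have hP {A : Set (Fin k → ℝ)} (hA : MeasurableSet A) :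
      P (γ ⁻¹' A) = Measure.pi (fun _ => ν) A := by
    rw [← Measure.map_apply_of_aemeasurable (aemeasurable_pi_lambda _ hγ) hA,
      hindep.map_fun_eq_pi_map hγ]
    simp only [hlaw']
  have hs : |θ i - θ' i| ≤ μ :=
    (single_le_sum (fun j _ => abs_nonneg (θ j - θ' j)) (Finset.mem_univ i)).trans hadj1
  have hθθ' := eq_add_single_of_subsingleton_ne hadj0 hi
  generalize θ i - θ' i = s at hs hθθ'
  subst hθθ'
  have hS' : MeasurableSet ((θ' + ·) ⁻¹' S) := hS.preimage (measurable_const_add θ')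
  calc P {ω | θ' + Pi.single i s + γ ω ∈ S}
      = Measure.pi (fun _ => ν) ((· + Pi.single i s) ⁻¹' ((θ' + ·) ⁻¹' S)) := by
        rw [← hP (hS'.preimage (measurable_add_const _))]
        congr 1 with ω
        change θ' + Pi.single i s + γ ω ∈ S ↔ θ' + (γ ω + Pi.single i s) ∈ S
        rw [add_assoc, add_comm _ (γ ω)]
    _ ≤ ENNReal.ofReal (Real.exp ε) * Measure.pi (fun _ => ν) ((θ' + ·) ⁻¹' S) +
          ENNReal.ofReal δ := by
        rw [hδ]
        exact Measure.pi_preimage_add_single_le (fun _ => ν)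
          (fun C hC => truncLapMeasure_preimage_add_le hε hμ hμγ hs hC) hS'
    _ = ENNReal.ofReal (Real.exp ε) * P {ω | θ' + γ ω ∈ S} + ENNReal.ofReal δ := by
        rw [← hP hS']
        rfl

/-- truncated Laplacian mechanism. Let `ε > 0`, `0 < μ ≤ γ̄`, and set
`δ = (e^ε - 1)/(2(e^{εγ̄/μ} - 1))`. Let `γ` be a random vector in `ℝ^k` with independent
coordinates, each distributed according to the truncated Laplacian density (that is,
having law `volume.withDensity p` with `p` the truncated Laplacian pdf). Then for every
pair `θ, θ'` that differ in at most one coordinate and satisfy `‖θ - θ'‖₁ ≤ μ`, and every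
Borel set `S ⊆ ℝ^k`, `P(θ + γ ∈ S) ≤ e^ε P(θ' + γ ∈ S) + δ`. -/
theorem stmt14 (ε μ γbar : ℝ) (hε : 0 < ε) (hμ : 0 < μ) (hμγ : μ ≤ γbar)
    (δ : ℝ) (hδ : δ = (Real.exp ε - 1) / (2 * (Real.exp (ε * γbar / μ) - 1)))
    (k : ℕ) (hk : 0 < k)
    {Ω : Type*} [MeasurableSpace Ω] (P : Measure Ω) [IsProbabilityMeasure P]
    (γ : Ω → Fin k → ℝ)
    (hindep : iIndepFun (fun i ω => γ ω i) P)
    (hlaw : ∀ i, Measure.map (fun ω => γ ω i) P =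
      MeasureTheory.volume.withDensity (fun x => ENNReal.ofReal (truncLapPDF ε μ γbar x)))
    (θ θ' : Fin k → ℝ)
    (hadj0 : {i | θ i ≠ θ' i}.Subsingleton)
    (hadj1 : ∑ i, |θ i - θ' i| ≤ μ)
    (S : Set (Fin k → ℝ)) (hS : MeasurableSet S) :
    P {ω | θ + γ ω ∈ S} ≤
      ENNReal.ofReal (Real.exp ε) * P {ω | θ' + γ ω ∈ S} + ENNReal.ofReal δ :=
  stmt14_general ε μ γbar hε hμ hμγ δ hδ k P γ hindep hlaw θ θ' hadj0 hadj1 S hS
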